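/- arXiv:1505.06070 — 8 statements merged into one kernel-verified Lean document; each statement's English description precedes it below -/
import Mathlib

section
/- Let $W_k$ be a nonnegative stochastic process with $\sigma(W_k) \subset \mathcal{F}_{k-1}$, $I_k$ indicator random variables with $P(I_k = 1 \mid \mathcal{F}_{k-1}) \geq p$, and $N$ a stopping time with $\{k < N\} \in \mathcal{F}_{k-1}$. Then $\mathbb{E}\left(\sum_{k=0}^{N-1} W_k (1 - I_k)\right) \leq (1-p)\, \mathbb{E}\left(\sum_{k=0}^{N-1} W_k\right)$. -/
open MeasureTheory ENNReal

/-!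
Summing over `k`, it suffices to bound each term. For fixed `k` the weight `g = 1_{k < N} W_k` is
`𝒢 k`-measurable, and on every `𝒢 k`-measurable set `s` the defining property of the conditional
expectation gives `∫_s (1 - I_k) = ∫_s (1 - E[I_k | 𝒢 k]) ≤ (1 - p) μ s`. Approximating the weight
by `𝒢 k`-simple functions extends this to `∫ g (1 - I_k) ≤ (1 - p) ∫ g`.
-/

section

variable {Ω : Type*} {m m0 : MeasurableSpace Ω} {μ : Measure Ω}

theorem lintegral_mul_le_of_forall_setLIntegral_le (hm : m ≤ m0) {J : Ω → ℝ≥0∞}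
    (hJ : Measurable J) {q : ℝ≥0∞}
    (hJq : ∀ s, MeasurableSet[m] s → ∫⁻ ω in s, J ω ∂μ ≤ q * μ s)
    {g : Ω → ℝ≥0∞} (hg : Measurable[m] g) :
    ∫⁻ ω, g ω * J ω ∂μ ≤ q * ∫⁻ ω, g ω ∂μ := by
  refine @Measurable.ennreal_induction Ω m
    (fun g => ∫⁻ ω, g ω * J ω ∂μ ≤ q * ∫⁻ ω, g ω ∂μ) ?indicator ?add ?iSup g hg
  case indicator =>
    intro c s hs
    calc ∫⁻ ω, s.indicator (fun _ => c) ω * J ω ∂μ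
        = c * ∫⁻ ω in s, J ω ∂μ := by
          simp_rw [← Set.indicator_mul_left]
          rw [lintegral_indicator (hm s hs), lintegral_const_mul c hJ]
      _ ≤ c * (q * μ s) := by gcongr; exact hJq s hs
      _ = q * ∫⁻ ω, s.indicator (fun _ => c) ω ∂μ := by
          rw [lintegral_indicator_const (hm s hs)]; ring
  case add =>
    intro f g _ hf _ ihf ihg
    have hf' : Measurable f := hf.mono hm le_rfl
    simp only [Pi.add_apply, add_mul]
    rw [lintegral_add_left (f := fun ω => f ω * J ω) (hf'.mul hJ), lintegral_add_left hf', mul_add]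
    exact add_le_add ihf ihg
  case iSup =>
    intro f hf hmono ih
    have hf' n : Measurable (f n) := (hf n).mono hm le_rfl
    simp_rw [ENNReal.iSup_mul]
    rw [lintegral_iSup (f := fun n ω => f n ω * J ω) (fun n => (hf' n).mul hJ)
        (fun a b h ω => mul_le_mul_left (hmono h ω) _),
      lintegral_iSup hf' hmono, ENNReal.mul_iSup]
    exact iSup_mono ih

theorem setLIntegral_ofReal_one_sub_le [IsFiniteMeasure μ] (hm : m ≤ m0) {I : Ω → ℝ}
    (hI : Integrable I μ) (hI1 : ∀ ω, I ω ≤ 1) {p : ℝ} (hp : ∀ᵐ ω ∂μ, p ≤ μ[I | m] ω)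
    {s : Set Ω} (hs : MeasurableSet[m] s) :
    ∫⁻ ω in s, ENNReal.ofReal (1 - I ω) ∂μ ≤ ENNReal.ofReal (1 - p) * μ s := by
  have hpI : p * μ.real s ≤ ∫ ω in s, I ω ∂μ := by
    rw [← setIntegral_condExp hm hI hs, mul_comm, ← smul_eq_mul, ← setIntegral_const]
    exact setIntegral_mono_ae_restrict (integrable_const p).integrableOn
      integrable_condExp.integrableOn (ae_restrict_of_ae hp)
  have hint : ∫ ω in s, (1 - I ω) ∂μ = μ.real s - ∫ ω in s, I ω ∂μ := by
    rw [integral_sub (integrable_const 1).integrableOn hI.integrableOn, setIntegral_const,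
      smul_eq_mul, mul_one]
  have hJ : Integrable (fun ω => 1 - I ω) μ := (integrable_const 1).sub hI
  rw [← ofReal_integral_eq_lintegral_ofReal hJ.integrableOn
      (ae_of_all _ fun ω => sub_nonneg.2 (hI1 ω)), ← ofReal_measureReal, ← ENNReal.ofReal_mul']
  · exact ENNReal.ofReal_le_ofReal (by rw [hint]; nlinarith)
  · exact measureReal_nonneg

end

theorem stmt_1_general
    {Ω : Type*} {m0 : MeasurableSpace Ω} (μ : Measure Ω) [IsProbabilityMeasure μ]
    (𝒢 : ℕ → MeasurableSpace Ω) (h𝒢 : ∀ k, 𝒢 k ≤ m0)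
    (W : ℕ → Ω → ℝ) (hWnonneg : ∀ k ω, 0 ≤ W k ω)
    (hWmeas : ∀ k, Measurable[𝒢 k] (W k))
    (I : ℕ → Ω → ℝ) (hImeas : ∀ k, Measurable (I k))
    (hIind : ∀ k ω, I k ω = 0 ∨ I k ω = 1)
    (p : ℝ)
    (hcond : ∀ k, ∀ᵐ ω ∂μ, p ≤ (μ[I k | 𝒢 k]) ω)
    (N : Ω → ℕ∞)
    (hN : ∀ k : ℕ, MeasurableSet[𝒢 k] {ω | (k : ℕ∞) < N ω}) :
    ∫⁻ ω, ∑' k : ℕ,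
        (if (k : ℕ∞) < N ω then ENNReal.ofReal (W k ω * (1 - I k ω)) else 0) ∂μ ≤
      ENNReal.ofReal (1 - p) * ∫⁻ ω, ∑' k : ℕ,
        (if (k : ℕ∞) < N ω then ENNReal.ofReal (W k ω) else 0) ∂μ := by
  set g : ℕ → Ω → ℝ≥0∞ := fun k =>
    {ω | (k : ℕ∞) < N ω}.indicator fun ω => ENNReal.ofReal (W k ω)
  have hg k : Measurable[𝒢 k] (g k) := (hWmeas k).ennreal_ofReal.indicator (hN k)
  have hJ k : Measurable fun ω => ENNReal.ofReal (1 - I k ω) :=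
    (measurable_const.sub (hImeas k)).ennreal_ofReal
  have hI1 k ω : I k ω ≤ 1 := by rcases hIind k ω with h | h <;> simp [h]
  have hIint k : Integrable (I k) μ := .of_mem_Icc 0 1 (hImeas k).aemeasurable <|
    ae_of_all _ fun ω => by rcases hIind k ω with h | h <;> simp [h]
  have hlhs (k : ℕ) (ω : Ω) :
      (if (k : ℕ∞) < N ω then ENNReal.ofReal (W k ω * (1 - I k ω)) else 0) =
        g k ω * ENNReal.ofReal (1 - I k ω) := by
    by_cases h : (k : ℕ∞) < N ω <;> simp [g, h, ENNReal.ofReal_mul (hWnonneg k ω)]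
  have hrhs (k : ℕ) (ω : Ω) : (if (k : ℕ∞) < N ω then ENNReal.ofReal (W k ω) else 0) = g k ω := by
    by_cases h : (k : ℕ∞) < N ω <;> simp [g, h]
  simp_rw [hlhs, hrhs]
  rw [lintegral_tsum (f := fun k ω => g k ω * ENNReal.ofReal (1 - I k ω))
      fun k => (((hg k).mono (h𝒢 k) le_rfl).mul (hJ k)).aemeasurable,
    lintegral_tsum fun k => ((hg k).mono (h𝒢 k) le_rfl).aemeasurable, ← ENNReal.tsum_mul_left]
  exact ENNReal.tsum_le_tsum fun k => lintegral_mul_le_of_forall_setLIntegral_le (h𝒢 k) (hJ k)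
    (fun s hs => setLIntegral_ofReal_one_sub_le (h𝒢 k) (hIint k) (hI1 k) (hcond k) hs) (hg k)

/-- Lemma 2.1 (second inequality): `E (∑_{k<N} W k * (1 - I k)) ≤ (1-p) * E (∑_{k<N} W k)`. -/
theorem stmt_1
    {Ω : Type*} {m0 : MeasurableSpace Ω} (μ : Measure Ω) [IsProbabilityMeasure μ]
    (𝒢 : ℕ → MeasurableSpace Ω) (h𝒢 : ∀ k, 𝒢 k ≤ m0)
    (W : ℕ → Ω → ℝ) (hWnonneg : ∀ k ω, 0 ≤ W k ω)
    (hWmeas : ∀ k, Measurable[𝒢 k] (W k))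
    (I : ℕ → Ω → ℝ) (hImeas : ∀ k, Measurable (I k))
    (hIind : ∀ k ω, I k ω = 0 ∨ I k ω = 1)
    (p : ℝ) (hp : 0 ≤ p) (hp1 : p ≤ 1)
    (hcond : ∀ k, ∀ᵐ ω ∂μ, p ≤ (μ[I k | 𝒢 k]) ω)
    (N : Ω → ℕ∞)
    (hN : ∀ k : ℕ, MeasurableSet[𝒢 k] {ω | (k : ℕ∞) < N ω}) :
    ∫⁻ ω, ∑' k : ℕ,
        (if (k : ℕ∞) < N ω then ENNReal.ofReal (W k ω * (1 - I k ω)) else 0) ∂μ ≤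
      ENNReal.ofReal (1 - p) * ∫⁻ ω, ∑' k : ℕ,
        (if (k : ℕ∞) < N ω then ENNReal.ofReal (W k ω) else 0) ∂μ :=
  stmt_1_general μ 𝒢 h𝒢 W hWnonneg hWmeas I hImeas hIind p hcond N hN
end

section
/- Consider a sequence $(\alpha_k)_{k \geq 0}$ of positive reals with $\alpha_0 \geq C > 0$, evolving by the rule: on 'successful' steps $\alpha_{k+1} = \min\{\alpha_{\max}, \gamma^{-1}\alpha_k\}$ and on 'unsuccessful' steps $\alpha_{k+1} = \gamma\alpha_k$, where $\gamma \in (0,1)$. Then for any $l$, the number of indices $k \leq l$ that are successful and satisfy $\alpha_k \leq C$ is at most $(l+1)/2$. -/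
/-!
Every unsuccessful step multiplies `α` by `γ`, and a successful step taken with `α k ≤ C`
divides it by `γ` exactly (the cap `αmax` is out of reach since `C < γ * αmax`); other successful
steps do not decrease `α`. Hence `γ ^ F * α 0 ≤ γ ^ B * α n`, where `F` counts the unsuccessful
and `B` the successful small steps before `n`. At a successful small step `α n ≤ C = γ ^ c * α 0`
this forces `B + c ≤ F`, hence `B < F`. So `B` can only increase while it is below `F`, which gives
`B ≤ F` throughout, and `2 * B ≤ B + F ≤ l + 1`.
-/

namespace Nat

variable {p q : ℕ → Prop} [DecidablePred p] [DecidablePred q]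

theorem count_le_count_of_forall_count_lt (hlt : ∀ n, p n → count p n < count q n) (n : ℕ) :
    count p n ≤ count q n := by
  induction n with
  | zero => simp
  | succ n ih =>
    rw [count_succ, count_succ]
    by_cases hp : p n
    · have := hlt n hp
      split_ifs <;> omega
    · split_ifs <;> omega

theorem count_add_count_le_of_disjoint (hpq : ∀ n, p n → ¬q n) (n : ℕ) :
    count p n + count q n ≤ n := by
  induction n with
  | zero => simp
  | succ n ih =>
    rw [count_succ, count_succ]
    by_cases hp : p n
    · simp only [hp, hpq n hp, if_true, if_false]
      omega
    · split_ifs <;> omega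

theorem two_mul_count_le_of_forall_count_lt (hpq : ∀ n, p n → ¬q n)
    (hlt : ∀ n, p n → count p n < count q n) (n : ℕ) :
    2 * count p n ≤ n := by
  have := count_le_count_of_forall_count_lt hlt n
  have := count_add_count_le_of_disjoint hpq n
  omega

end Nat

structure IsStepSizeSequence (γ αmax : ℝ) (α : ℕ → ℝ) (success : ℕ → Bool) : Prop where
  succ : ∀ k, success k = true → α (k + 1) = min αmax (γ⁻¹ * α k)
  fail : ∀ k, success k = false → α (k + 1) = γ * α k

namespace IsStepSizeSequence

variable {γ αmax C : ℝ} {α : ℕ → ℝ} {success : ℕ → Bool}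

theorem pos (h : IsStepSizeSequence γ αmax α success) (hγ : 0 < γ) (hmax : 0 < αmax)
    (h0 : 0 < α 0) (n : ℕ) : 0 < α n := by
  induction n with
  | zero => exact h0
  | succ n ih =>
    cases hs : success n
    · rw [h.fail n hs]; positivity
    · rw [h.succ n hs]; exact lt_min hmax (by positivity)

theorem le_max (h : IsStepSizeSequence γ αmax α success) (hγ0 : 0 < γ) (hγ1 : γ ≤ 1)
    (h0 : 0 < α 0) (h0max : α 0 ≤ αmax) (n : ℕ) : α n ≤ αmax := by
  induction n with
  | zero => exact h0max
  | succ n ih =>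
    cases hs : success n
    · rw [h.fail n hs]
      exact (mul_le_of_le_one_left (h.pos hγ0 (h0.trans_le h0max) h0 n).le hγ1).trans ih
    · rw [h.succ n hs]; exact min_le_left _ _

theorem le_succ_of_success (h : IsStepSizeSequence γ αmax α success) (hγ0 : 0 < γ)
    (hγ1 : γ ≤ 1) (h0 : 0 < α 0) (h0max : α 0 ≤ αmax) {n : ℕ} (hs : success n = true) :
    α n ≤ α (n + 1) := by
  rw [h.succ n hs]
  refine le_min (h.le_max hγ0 hγ1 h0 h0max n) ?_
  exact (le_inv_mul_iff₀ hγ0).2 <|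
    mul_le_of_le_one_left (h.pos hγ0 (h0.trans_le h0max) h0 n).le hγ1

theorem succ_eq_inv_mul_of_success (h : IsStepSizeSequence γ αmax α success) (hγ : 0 < γ)
    {n : ℕ} (hs : success n = true) (hn : α n ≤ γ * αmax) : α (n + 1) = γ⁻¹ * α n := by
  rw [h.succ n hs, min_eq_right]
  rwa [inv_mul_le_iff₀ hγ]

theorem pow_count_fail_mul_le (h : IsStepSizeSequence γ αmax α success) (hγ0 : 0 < γ)
    (hγ1 : γ ≤ 1) (h0 : 0 < α 0) (h0max : α 0 ≤ αmax) (hCmax : C < γ * αmax) (n : ℕ) :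
    γ ^ Nat.count (fun k => success k = false) n * α 0 ≤
      γ ^ Nat.count (fun k => success k = true ∧ α k ≤ C) n * α n := by
  induction n with
  | zero => simp
  | succ n ih =>
    simp only [Nat.count_succ]
    cases hs : success n
    · simp only [if_true, if_false, Bool.false_eq_true, false_and, add_zero, pow_succ,
        h.fail n hs]
      linarith [mul_le_mul_of_nonneg_left ih hγ0.le]
    · by_cases hC : α n ≤ C
      · simp only [hC, if_true, if_false, Bool.true_eq_false, and_self, add_zero, pow_succ,
          h.succ_eq_inv_mul_of_success hγ0 hs (hC.trans hCmax.le)]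
        rwa [mul_assoc, mul_inv_cancel_left₀ hγ0.ne']
      · simp only [hC, if_false, Bool.true_eq_false, and_false, add_zero]
        exact ih.trans <| mul_le_mul_of_nonneg_left
          (h.le_succ_of_success hγ0 hγ1 h0 h0max hs) (by positivity)

theorem count_small_success_lt_count_fail (h : IsStepSizeSequence γ αmax α success)
    (hγ0 : 0 < γ) (hγ1 : γ < 1) (h0 : 0 < α 0) (h0max : α 0 ≤ αmax) (hCmax : C < γ * αmax)
    {c : ℕ} (hc : 1 ≤ c) (hCval : C = γ ^ c * α 0) {n : ℕ}
    (hn : success n = true ∧ α n ≤ C) :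
    Nat.count (fun k => success k = true ∧ α k ≤ C) n <
      Nat.count (fun k => success k = false) n := by
  set B := Nat.count (fun k => success k = true ∧ α k ≤ C) n
  set F := Nat.count (fun k => success k = false) n
  have key : γ ^ F * α 0 ≤ γ ^ (B + c) * α 0 :=
    calc γ ^ F * α 0 ≤ γ ^ B * α n := h.pow_count_fail_mul_le hγ0 hγ1.le h0 h0max hCmax n
      _ ≤ γ ^ B * C := by gcongr; exact hn.2
      _ = γ ^ (B + c) * α 0 := by rw [hCval, pow_add, mul_assoc]
  have hBF : B + c ≤ F :=
    (pow_le_pow_iff_right_of_lt_one₀ hγ0 hγ1).1 (le_of_mul_le_mul_right key h0)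
  omega

end IsStepSizeSequence

theorem stmt_2_general
    (γ C αmax : ℝ) (α : ℕ → ℝ) (success : ℕ → Bool)
    (hγ0 : 0 < γ) (hγ1 : γ < 1)
    (hC : 0 < C)
    (hα0max : α 0 < αmax)
    (c : ℕ) (hc : 1 ≤ c) (hCval : C = γ ^ c * α 0)
    (hCmax : C < γ * αmax)
    (hsucc : ∀ k, success k = true → α (k + 1) = min αmax (γ⁻¹ * α k))
    (hfail : ∀ k, success k = false → α (k + 1) = γ * α k)
    (l : ℕ) :
    (((Finset.range (l + 1)).filter (fun k => success k = true ∧ α k ≤ C)).card : ℝ) ≤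
      (l + 1) / 2 := by
  have h : IsStepSizeSequence γ αmax α success := ⟨hsucc, hfail⟩
  have h0 : 0 < α 0 := pos_of_mul_pos_right (hCval ▸ hC) (by positivity)
  have hbound := Nat.two_mul_count_le_of_forall_count_lt
    (q := fun k => success k = false) (fun k hk => by simp [hk.1])
    (fun n hn => h.count_small_success_lt_count_fail hγ0 hγ1 h0 hα0max.le hCmax hc hCval hn)
    (l + 1)
  rw [← Nat.count_eq_card_filter_range, le_div_iff₀ two_pos]
  exact_mod_cast (by omega : Nat.count (fun k => success k = true ∧ α k ≤ C) (l + 1) * 2 ≤ l + 1)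

/-- Lemma 2.2: at most half of the iterations `k ≤ l` can be successful with `α k ≤ C`. -/
theorem stmt_2
    (γ C αmax : ℝ) (α : ℕ → ℝ) (success : ℕ → Bool)
    (hγ0 : 0 < γ) (hγ1 : γ < 1)
    (hC : 0 < C) (hCα0 : C ≤ α 0)
    (hα0max : α 0 < αmax)
    (c : ℕ) (hc : 1 ≤ c) (hCval : C = γ ^ c * α 0)
    (hCmax : C < γ * αmax)
    (hsucc : ∀ k, success k = true → α (k + 1) = min αmax (γ⁻¹ * α k))
    (hfail : ∀ k, success k = false → α (k + 1) = γ * α k)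
    (l : ℕ) :
    (((Finset.range (l + 1)).filter (fun k => success k = true ∧ α k ≤ C)).card : ℝ) ≤
      (l + 1) / 2 :=
  stmt_2_general γ C αmax α success hγ0 hγ1 hC hα0max c hc hCval hCmax hsucc hfail l
end

section
/- Let $f : \mathbb{R}^n \to \mathbb{R}$ be continuously differentiable with $L$-Lipschitz gradient. Let $x, g \in \mathbb{R}^n$, $\alpha > 0$, $\theta \in (0,1)$, $\kappa > 0$, and suppose $\|g - \nabla f(x)\| \leq \kappa \alpha \|g\|$. If $\alpha \leq \frac{1-\theta}{L/2 + \kappa}$, then $f(x - \alpha g) \leq f(x) - \alpha \theta \|g\|^2$. -/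
/-!
The step `-α • g` is a descent direction because `g` is close to `∇f x`: the accuracy condition
gives `⟪∇f x, g⟫ ≥ (1 - κα)‖g‖²`. Plugging this into the descent lemma
`f (x + s) ≤ f x + ⟪∇f x, s⟫ + L/2 ‖s‖²` at `s = -α • g` bounds the decrease by
`α (1 - α (L/2 + κ)) ‖g‖²`, which is at least `α θ ‖g‖²` for the admissible step sizes.
-/

open scoped RealInnerProductSpace

variable {E : Type*} [NormedAddCommGroup E] [InnerProductSpace ℝ E]

theorem real_inner_ge_of_norm_sub_le {u g : E} {ε : ℝ} (h : ‖g - u‖ ≤ ε * ‖g‖) :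
    (1 - ε) * ‖g‖ ^ 2 ≤ ⟪u, g⟫ := by
  have hdev : ⟪g - u, g⟫ ≤ ε * ‖g‖ ^ 2 :=
    calc ⟪g - u, g⟫ ≤ ‖g - u‖ * ‖g‖ := real_inner_le_norm _ _
      _ ≤ ε * ‖g‖ * ‖g‖ := by gcongr
      _ = ε * ‖g‖ ^ 2 := by ring
  rw [inner_sub_left, real_inner_self_eq_norm_sq] at hdev
  linarith

variable [CompleteSpace E]

theorem DifferentiableAt.hasDerivAt_comp_add_smul {f : E → ℝ} {x s : E} {t : ℝ}
    (hf : DifferentiableAt ℝ f (x + t • s)) :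
    HasDerivAt (fun t : ℝ => f (x + t • s)) ⟪gradient f (x + t • s), s⟫ t := by
  have hline : HasDerivAt (fun t : ℝ => x + t • s) s t := by
    simpa using ((hasDerivAt_id t).smul_const s).const_add x
  rw [inner_gradient_left]
  exact hf.hasFDerivAt.comp_hasDerivAt t hline

theorem inner_gradient_add_smul_sub_le {f : E → ℝ} {L : ℝ}
    (hLip : ∀ x y, ‖gradient f x - gradient f y‖ ≤ L * ‖x - y‖) (x s : E) {t : ℝ} (ht : 0 ≤ t) :
    ⟪gradient f (x + t • s), s⟫ - ⟪gradient f x, s⟫ ≤ L * t * ‖s‖ ^ 2 :=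
  calc ⟪gradient f (x + t • s), s⟫ - ⟪gradient f x, s⟫
      = ⟪gradient f (x + t • s) - gradient f x, s⟫ := (inner_sub_left ..).symm
    _ ≤ ‖gradient f (x + t • s) - gradient f x‖ * ‖s‖ := real_inner_le_norm _ _
    _ ≤ L * ‖t • s‖ * ‖s‖ := by
      gcongr
      simpa using hLip (x + t • s) x
    _ = L * t * ‖s‖ ^ 2 := by rw [norm_smul, Real.norm_of_nonneg ht]; ring

theorem image_add_le_of_lipschitz_gradient {f : E → ℝ} {L : ℝ} (hf : Differentiable ℝ f)
    (hLip : ∀ x y, ‖gradient f x - gradient f y‖ ≤ L * ‖x - y‖) (x s : E) :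
    f (x + s) ≤ f x + ⟪gradient f x, s⟫ + L / 2 * ‖s‖ ^ 2 := by
  set ψ : ℝ → ℝ := fun t => f (x + t • s) - t * ⟪gradient f x, s⟫ - L / 2 * t ^ 2 * ‖s‖ ^ 2
  have hψ : ∀ t, HasDerivAt ψ
      (⟪gradient f (x + t • s), s⟫ - ⟪gradient f x, s⟫ - L * t * ‖s‖ ^ 2) t := fun t => by
    have hquad := ((hasDerivAt_pow 2 t).const_mul (L / 2)).mul_const (‖s‖ ^ 2)
    refine (((hf _).hasDerivAt_comp_add_smul.sub
      ((hasDerivAt_id t).mul_const ⟪gradient f x, s⟫)).sub hquad).congr_deriv ?_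
    simp only [one_mul, Nat.cast_ofNat]
    ring
  have hψ_anti : AntitoneOn ψ (Set.Icc 0 1) := by
    refine antitoneOn_of_hasDerivWithinAt_nonpos (convex_Icc 0 1)
      (fun t _ => (hψ t).continuousAt.continuousWithinAt) (fun t _ => (hψ t).hasDerivWithinAt)
      fun t ht => ?_
    rw [interior_Icc] at ht
    linarith [inner_gradient_add_smul_sub_le hLip x s ht.1.le]
  have h := hψ_anti (Set.left_mem_Icc.2 zero_le_one) (Set.right_mem_Icc.2 zero_le_one) zero_le_one
  simp only [ψ, zero_smul, one_smul, add_zero, zero_mul, one_mul, one_pow] at h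
  linarith

theorem image_sub_smul_le_of_norm_sub_gradient_le {f : E → ℝ} {L κ α θ : ℝ}
    (hf : Differentiable ℝ f) (hLip : ∀ x y, ‖gradient f x - gradient f y‖ ≤ L * ‖x - y‖)
    {x g : E} (hacc : ‖g - gradient f x‖ ≤ κ * α * ‖g‖) (hα : 0 ≤ α)
    (hstep : α * (L / 2 + κ) ≤ 1 - θ) :
    f (x - α • g) ≤ f x - α * θ * ‖g‖ ^ 2 := by
  have hdesc := image_add_le_of_lipschitz_gradient hf hLip x (-(α • g))
  rw [← sub_eq_add_neg, inner_neg_right, real_inner_smul_right, norm_neg, norm_smul,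
    Real.norm_of_nonneg hα] at hdesc
  have hinner := real_inner_ge_of_norm_sub_le hacc
  calc f (x - α • g) ≤ f x - α * ⟪gradient f x, g⟫ + L / 2 * (α * ‖g‖) ^ 2 := by linarith
    _ ≤ f x - α * ((1 - κ * α) * ‖g‖ ^ 2) + L / 2 * (α * ‖g‖) ^ 2 := by gcongr
    _ = f x - α * (1 - α * (L / 2 + κ)) * ‖g‖ ^ 2 := by ring
    _ ≤ f x - α * θ * ‖g‖ ^ 2 := by gcongr; linarith

theorem stmt_7_general
    {n : ℕ} (f : EuclideanSpace ℝ (Fin n) → ℝ) (L : ℝ) (hL : 0 < L)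
    (hdiff : Differentiable ℝ f)
    (hLip : ∀ x y, ‖gradient f x - gradient f y‖ ≤ L * ‖x - y‖)
    (x g : EuclideanSpace ℝ (Fin n)) (α θ κ : ℝ)
    (hα : 0 < α) (hκ : 0 < κ)
    (hacc : ‖g - gradient f x‖ ≤ κ * α * ‖g‖)
    (hαsmall : α ≤ (1 - θ) / (L / 2 + κ)) :
    f (x - α • g) ≤ f x - α * θ * ‖g‖ ^ 2 := by
  have hstep : α * (L / 2 + κ) ≤ 1 - θ := (le_div_iff₀ (by positivity)).1 hαsmall
  exact image_sub_smul_le_of_norm_sub_gradient_le hdiff hLip hacc hα.le hstep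

/-- Lemma 3.1: linesearch sufficient decrease with a probabilistically accurate gradient. -/
theorem stmt_7
    {n : ℕ} (f : EuclideanSpace ℝ (Fin n) → ℝ) (L : ℝ) (hL : 0 < L)
    (hdiff : Differentiable ℝ f)
    (hLip : ∀ x y, ‖gradient f x - gradient f y‖ ≤ L * ‖x - y‖)
    (x g : EuclideanSpace ℝ (Fin n)) (α θ κ : ℝ)
    (hα : 0 < α) (hθ0 : 0 < θ) (hθ1 : θ < 1) (hκ : 0 < κ)
    (hacc : ‖g - gradient f x‖ ≤ κ * α * ‖g‖)
    (hαsmall : α ≤ (1 - θ) / (L / 2 + κ)) :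
    f (x - α • g) ≤ f x - α * θ * ‖g‖ ^ 2 :=
  stmt_7_general f L hL hdiff hLip x g α θ κ hα hκ hacc hαsmall
end

section
/- Let $f : \mathbb{R}^n \to \mathbb{R}$ be convex and differentiable with minimizer $x^*$, and assume $\|x - x^*\| \leq D$ for all $x$ in the relevant level set. Let $x^k$ satisfy $f(x^k) \leq f(x^0)$, let $g^k$ satisfy $\|\nabla f(x^k)\| \leq (1 + \kappa\alpha_{\max})\|g^k\|$, and suppose $f(x^{k+1}) \leq f(x^k) - \theta \alpha_k \|g^k\|^2$ with $f(x^{k+1}) > f(x^*)$. Then, with $\Delta_j = f(x^j) - f(x^*)$, $\frac{1}{\Delta_{k+1}} - \frac{1}{\Delta_k} \geq \frac{\theta \alpha_k}{D^2 (1 + \kappa \alpha_{\max})^2}$. -/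
/-!
Convexity gives `Δₖ ≤ ⟪∇f(xᵏ), xᵏ - x*⟫ ≤ D ‖∇f(xᵏ)‖ ≤ C ‖gᵏ‖` with `C = D (1 + κ αmax)`, so the
sufficient decrease `Δₖ₊₁ ≤ Δₖ - θ αₖ ‖gᵏ‖²` yields `Δₖ - Δₖ₊₁ ≥ θ αₖ Δₖ² / C² ≥ θ αₖ Δₖ Δₖ₊₁ / C²`;
dividing by `Δₖ Δₖ₊₁` is the claim.
-/

open scoped RealInnerProductSpace

theorem ConvexOn.fderiv_sub_le {E : Type*} [NormedAddCommGroup E] [NormedSpace ℝ E]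
    {s : Set E} {f : E → ℝ} {f' : E →L[ℝ] ℝ} {x y : E} (hf : ConvexOn ℝ s f)
    (hx : x ∈ s) (hy : y ∈ s) (hf' : HasFDerivAt f f' x) :
    f' (y - x) ≤ f y - f x := by
  have hline : ConvexOn ℝ (Set.Icc (0 : ℝ) 1) (f ∘ AffineMap.lineMap (k := ℝ) x y) :=
    (hf.comp_affineMap (AffineMap.lineMap x y)).subset
      (fun t ht => hf.1.lineMap_mem hx hy ht) (convex_Icc 0 1)
  have hderiv : HasDerivAt (f ∘ AffineMap.lineMap (k := ℝ) x y) (f' (y - x)) 0 :=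
    hf'.comp_hasDerivAt_of_eq 0 AffineMap.hasDerivAt_lineMap (by simp)
  simpa [slope_def_field] using
    hline.le_slope_of_hasDerivAt (by simp) (by simp) zero_lt_one hderiv

section InnerProductSpace

variable {E : Type*} [NormedAddCommGroup E] [InnerProductSpace ℝ E] [CompleteSpace E]
  {s : Set E} {f : E → ℝ}

theorem ConvexOn.inner_gradient_sub_le {x y : E} (hf : ConvexOn ℝ s f)
    (hx : x ∈ s) (hy : y ∈ s) (hfx : DifferentiableAt ℝ f x) :
    ⟪gradient f x, y - x⟫ ≤ f y - f x := by
  simpa using hf.fderiv_sub_le hx hy hfx.hasGradientAt.hasFDerivAt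

theorem ConvexOn.sub_le_mul_norm_gradient {x xstar : E} {D : ℝ} (hf : ConvexOn ℝ s f)
    (hx : x ∈ s) (hxstar : xstar ∈ s) (hfx : DifferentiableAt ℝ f x) (hD : ‖x - xstar‖ ≤ D) :
    f x - f xstar ≤ D * ‖gradient f x‖ := by
  have hcs := neg_le_of_abs_le (abs_real_inner_le_norm (gradient f x) (xstar - x))
  have hfirst := hf.inner_gradient_sub_le hx hxstar hfx
  rw [norm_sub_rev] at hD
  nlinarith [norm_nonneg (gradient f x)]

end InnerProductSpace

theorem div_sq_le_one_div_sub_one_div {Δ Δ' c C g : ℝ} (hΔ' : 0 < Δ') (hc : 0 ≤ c)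
    (hdec : Δ' ≤ Δ - c * g ^ 2) (hgap : Δ ≤ C * g) :
    c / C ^ 2 ≤ 1 / Δ' - 1 / Δ := by
  have hΔ'Δ : Δ' ≤ Δ := hdec.trans (sub_le_self _ (by positivity))
  have hΔ : 0 < Δ := hΔ'.trans_le hΔ'Δ
  have hsq : Δ ^ 2 ≤ C ^ 2 * g ^ 2 := by
    rw [← mul_pow]; exact pow_le_pow_left₀ hΔ.le hgap 2
  have hC : 0 < C ^ 2 := by
    by_contra! h
    nlinarith [sq_nonneg C, sq_nonneg g]
  rw [one_div, one_div, inv_sub_inv hΔ'.ne' hΔ.ne', div_le_div_iff₀ hC (by positivity)]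
  calc c * (Δ' * Δ) ≤ c * Δ ^ 2 := by gcongr; nlinarith
    _ ≤ c * g ^ 2 * C ^ 2 := by nlinarith
    _ ≤ (Δ - Δ') * C ^ 2 := by gcongr; linarith

theorem stmt_10_general
    {n : ℕ} (f : EuclideanSpace ℝ (Fin n) → ℝ)
    (hdiff : Differentiable ℝ f)
    (hconv : ConvexOn ℝ Set.univ f)
    (xstar x0 xk xk1 gk : EuclideanSpace ℝ (Fin n))
    (D θ κ αmax αk : ℝ)
    (hθ0 : 0 < θ) (hαk : 0 < αk)
    (hlevel : ∀ x, f x ≤ f x0 → ‖x - xstar‖ ≤ D)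
    (hxk : f xk ≤ f x0)
    (hgrad : ‖gradient f xk‖ ≤ (1 + κ * αmax) * ‖gk‖)
    (hdec : f xk1 ≤ f xk - θ * αk * ‖gk‖ ^ 2)
    (hpos : f xstar < f xk1) :
    θ * αk / (D ^ 2 * (1 + κ * αmax) ^ 2) ≤
      1 / (f xk1 - f xstar) - 1 / (f xk - f xstar) := by
  have hdist : ‖xk - xstar‖ ≤ D := hlevel xk hxk
  have hgap : f xk - f xstar ≤ D * (1 + κ * αmax) * ‖gk‖ :=
    calc f xk - f xstar ≤ D * ‖gradient f xk‖ :=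
          hconv.sub_le_mul_norm_gradient trivial trivial (hdiff xk) hdist
      _ ≤ D * ((1 + κ * αmax) * ‖gk‖) :=
          mul_le_mul_of_nonneg_left hgrad ((norm_nonneg _).trans hdist)
      _ = D * (1 + κ * αmax) * ‖gk‖ := by ring
  rw [← mul_pow]
  exact div_sq_le_one_div_sub_one_div (sub_pos.2 hpos) (by positivity) (by linarith) hgap

/-- Lemma 3.3 (convex case): gain in `1/Δ` on a true successful iteration. -/
theorem stmt_10
    {n : ℕ} (f : EuclideanSpace ℝ (Fin n) → ℝ)
    (hdiff : Differentiable ℝ f)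
    (hconv : ConvexOn ℝ Set.univ f)
    (xstar x0 xk xk1 gk : EuclideanSpace ℝ (Fin n))
    (hmin : ∀ x, f xstar ≤ f x)
    (D θ κ αmax αk : ℝ)
    (hD : 0 < D) (hθ0 : 0 < θ) (hθ1 : θ < 1) (hκ : 0 < κ)
    (hαmax : 0 < αmax) (hαk : 0 < αk)
    (hlevel : ∀ x, f x ≤ f x0 → ‖x - xstar‖ ≤ D)
    (hxk : f xk ≤ f x0)
    (hgrad : ‖gradient f xk‖ ≤ (1 + κ * αmax) * ‖gk‖)
    (hdec : f xk1 ≤ f xk - θ * αk * ‖gk‖ ^ 2)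
    (hpos : f xstar < f xk1) :
    θ * αk / (D ^ 2 * (1 + κ * αmax) ^ 2) ≤
      1 / (f xk1 - f xstar) - 1 / (f xk - f xstar) :=
  stmt_10_general f hdiff hconv xstar x0 xk xk1 gk D θ κ αmax αk hθ0 hαk hlevel hxk hgrad hdec hpos
end

section
/- Let $s \in \mathbb{R}^n$, $g \in \mathbb{R}^n$, $b$ a symmetric $n \times n$ matrix, $\sigma > 0$, and define the cubic model $m(s) = f_0 + s^T g + \frac{1}{2} s^T b s + \frac{\sigma}{3}\|s\|^3$. If $s$ satisfies $s^T g + s^T b s + \sigma \|s\|^3 = 0$ and $s^T b s + \sigma \|s\|^3 \geq 0$, then $f_0 - m(s) \geq \frac{\sigma}{6}\|s\|^3$. -/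
open scoped RealInnerProductSpace

theorem stmt_13_general
    {n : ℕ} (s g : EuclideanSpace ℝ (Fin n))
    (b : EuclideanSpace ℝ (Fin n) →L[ℝ] EuclideanSpace ℝ (Fin n))
    (σ f0 : ℝ)
    (h1 : ⟪s, g⟫ + ⟪s, b s⟫ + σ * ‖s‖ ^ 3 = 0)
    (h2 : 0 ≤ ⟪s, b s⟫ + σ * ‖s‖ ^ 3) :
    σ / 6 * ‖s‖ ^ 3 ≤
      f0 - (f0 + ⟪s, g⟫ + 1 / 2 * ⟪s, b s⟫ + σ / 3 * ‖s‖ ^ 3) := by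
  calc σ / 6 * ‖s‖ ^ 3 ≤ 1 / 2 * (⟪s, b s⟫ + σ * ‖s‖ ^ 3) + σ / 6 * ‖s‖ ^ 3 := by linarith
    _ = f0 - (f0 + ⟪s, g⟫ + 1 / 2 * ⟪s, b s⟫ + σ / 3 * ‖s‖ ^ 3) := by linarith

/-- Lemma 4.1: model decrease for the cubic model. -/
theorem stmt_13
    {n : ℕ} (s g : EuclideanSpace ℝ (Fin n))
    (b : EuclideanSpace ℝ (Fin n) →L[ℝ] EuclideanSpace ℝ (Fin n))
    (hsymm : ∀ u v, ⟪b u, v⟫ = ⟪u, b v⟫)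
    (σ f0 : ℝ) (hσ : 0 < σ)
    (h1 : ⟪s, g⟫ + ⟪s, b s⟫ + σ * ‖s‖ ^ 3 = 0)
    (h2 : 0 ≤ ⟪s, b s⟫ + σ * ‖s‖ ^ 3) :
    σ / 6 * ‖s‖ ^ 3 ≤
      f0 - (f0 + ⟪s, g⟫ + 1 / 2 * ⟪s, b s⟫ + σ / 3 * ‖s‖ ^ 3) :=
  stmt_13_general s g b σ f0 h1 h2
end

section
/- Let $f \in C^2(\mathbb{R}^n)$ have $L_H$-Lipschitz Hessian $H$. Let $x, s, g \in \mathbb{R}^n$ and $b$ a matrix with $\|\nabla f(x) - g\| \leq \kappa_g\|s\|^2$ and $\|(H(x) - b)s\| \leq \kappa_H\|s\|^2$. Define $m(s) = f(x) + s^T g + \frac{1}{2}s^T b s + \frac{\sigma}{3}\|s\|^3$. Then $f(x+s) - m(x+s) \leq \left(\kappa_g + \frac{L_H}{2} + \frac{\kappa_H}{2} - \frac{\sigma}{3}\right)\|s\|^3$. -/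
/-!
Along the segment `t ↦ x + t • s`, the mean value inequality and the Lipschitz bound on `H` give
`‖∇f(x + t s) - ∇f x - t H(x) s‖ ≤ L_H t² ‖s‖²`; integrating this over `t ∈ [0, 1]` bounds the
second-order Taylor remainder of `f` by `L_H/3 ‖s‖³ ≤ L_H/2 ‖s‖³`. The model differs from the Taylor
polynomial by `⟪∇f x - g, s⟫ + ½⟪(H x - b) s, s⟫`, which Cauchy–Schwarz and the two accuracy
conditions bound by `(κ_g + κ_H/2) ‖s‖³`.
-/

open Set
open scoped RealInnerProductSpace

theorem norm_sub_sub_apply_le_of_lipschitz_fderiv {E F : Type*}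
    [NormedAddCommGroup E] [NormedSpace ℝ E] [NormedAddCommGroup F] [NormedSpace ℝ F]
    {g : E → F} {g' : E → E →L[ℝ] F} {L : ℝ} {x h : E} (hL0 : 0 ≤ L)
    (hg : ∀ y, HasFDerivAt g (g' y) y) (hL : ∀ y, ‖g' y - g' x‖ ≤ L * ‖y - x‖) :
    ‖g (x + h) - g x - g' x h‖ ≤ L * ‖h‖ ^ 2 := by
  have hbound : ∀ y ∈ segment ℝ x (x + h), ‖g' y - g' x‖ ≤ L * ‖h‖ := fun y hy =>
    (hL y).trans <| mul_le_mul_of_nonneg_left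
      (by simpa using norm_sub_le_of_mem_segment hy) hL0
  simpa [sq, mul_assoc] using
    (convex_segment x (x + h)).norm_image_sub_le_of_norm_hasFDerivWithin_le'
      (fun y _ => (hg y).hasFDerivWithinAt) hbound
      (left_mem_segment ℝ _ _) (right_mem_segment ℝ _ _)

theorem sub_le_of_hasDerivAt_le_mul_sq {φ φ' : ℝ → ℝ} {C : ℝ}
    (hφ : ∀ t ∈ Icc (0 : ℝ) 1, HasDerivAt φ (φ' t) t)
    (hle : ∀ t ∈ Ioo (0 : ℝ) 1, φ' t ≤ C * t ^ 2) :
    φ 1 - φ 0 ≤ C / 3 := by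
  set ψ : ℝ → ℝ := fun t => C * t ^ 3 / 3 - φ t
  have hψ : ∀ t ∈ Icc (0 : ℝ) 1, HasDerivAt ψ (C * t ^ 2 - φ' t) t := fun t ht =>
    ((((hasDerivAt_pow 3 t).const_mul C).div_const 3).sub (hφ t ht)).congr_deriv (by ring)
  have hmono : MonotoneOn ψ (Icc 0 1) := by
    refine monotoneOn_of_deriv_nonneg (convex_Icc 0 1)
      (fun t ht => (hψ t ht).continuousAt.continuousWithinAt)
      (fun t ht => (hψ t (interior_subset ht)).differentiableAt.differentiableWithinAt)
      (fun t ht => ?_)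
    rw [interior_Icc] at ht
    rw [(hψ t (Ioo_subset_Icc_self ht)).deriv]
    linarith [hle t ht]
  have hψ01 := hmono (left_mem_Icc.2 zero_le_one) (right_mem_Icc.2 zero_le_one) zero_le_one
  simp only [ψ] at hψ01
  linarith

theorem inner_le_of_norm_le_mul_sq {E : Type*} [NormedAddCommGroup E] [InnerProductSpace ℝ E]
    {u s : E} {c : ℝ} (hu : ‖u‖ ≤ c * ‖s‖ ^ 2) : ⟪u, s⟫ ≤ c * ‖s‖ ^ 3 :=
  calc ⟪u, s⟫ ≤ ‖u‖ * ‖s‖ := real_inner_le_norm u s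
    _ ≤ c * ‖s‖ ^ 2 * ‖s‖ := mul_le_mul_of_nonneg_right hu (norm_nonneg s)
    _ = c * ‖s‖ ^ 3 := by ring

theorem taylor_remainder_le_of_lipschitz_hessian {E : Type*} [NormedAddCommGroup E]
    [InnerProductSpace ℝ E] [CompleteSpace E] {f : E → ℝ} {H : E → E →L[ℝ] E} {L : ℝ} {x s : E}
    (hf : Differentiable ℝ f) (hH : ∀ y, HasFDerivAt (gradient f) (H y) y) (hL0 : 0 ≤ L)
    (hL : ∀ y, ‖H y - H x‖ ≤ L * ‖y - x‖) :
    f (x + s) - f x - ⟪gradient f x, s⟫ - 1 / 2 * ⟪H x s, s⟫ ≤ L / 3 * ‖s‖ ^ 3 := by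
  set φ : ℝ → ℝ := fun t => f (x + t • s) - t * ⟪gradient f x, s⟫ - t ^ 2 / 2 * ⟪H x s, s⟫
  have hline : ∀ t : ℝ, HasDerivAt (fun t : ℝ => x + t • s) s t := fun t => by
    simpa using ((hasDerivAt_id t).smul_const s).const_add x
  have hφ : ∀ t : ℝ,
      HasDerivAt φ ⟪gradient f (x + t • s) - gradient f x - H x (t • s), s⟫ t := fun t => by
    have hft : HasDerivAt (fun t : ℝ => f (x + t • s)) ⟪gradient f (x + t • s), s⟫ t := by
      have := (hf (x + t • s)).hasGradientAt.hasFDerivAt.comp_hasDerivAt t (hline t)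
      rw [InnerProductSpace.toDual_apply_apply] at this
      exact this
    have hquad := ((hasDerivAt_pow 2 t).div_const 2).mul_const ⟪H x s, s⟫
    refine ((hft.sub ((hasDerivAt_id t).mul_const ⟪gradient f x, s⟫)).sub hquad).congr_deriv ?_
    simp only [inner_sub_left, map_smul, real_inner_smul_left]
    push_cast
    ring
  have hφ' : ∀ t ∈ Ioo (0 : ℝ) 1,
      ⟪gradient f (x + t • s) - gradient f x - H x (t • s), s⟫ ≤ L * ‖s‖ ^ 3 * t ^ 2 := by
    intro t _
    have hts : ‖t • s‖ ^ 2 = t ^ 2 * ‖s‖ ^ 2 := by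
      rw [norm_smul, Real.norm_eq_abs, mul_pow, sq_abs]
    have := inner_le_of_norm_le_mul_sq (s := s)
      ((norm_sub_sub_apply_le_of_lipschitz_fderiv hL0 hH hL).trans_eq
        (by rw [hts, ← mul_assoc, mul_comm L]))
    linarith
  have hφ01 := sub_le_of_hasDerivAt_le_mul_sq (fun t _ => hφ t) hφ'
  simp only [φ, one_smul, zero_smul, add_zero] at hφ01
  linarith

theorem stmt_14_general
    {n : ℕ} (f : EuclideanSpace ℝ (Fin n) → ℝ)
    (hdiff : Differentiable ℝ f)
    (H : EuclideanSpace ℝ (Fin n) → EuclideanSpace ℝ (Fin n) →L[ℝ] EuclideanSpace ℝ (Fin n))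
    (hH : ∀ x, HasFDerivAt (gradient f) (H x) x)
    (LH : ℝ) (hLH : 0 < LH)
    (hHLip : ∀ x y, ‖H x - H y‖ ≤ LH * ‖x - y‖)
    (x s g : EuclideanSpace ℝ (Fin n))
    (b : EuclideanSpace ℝ (Fin n) →L[ℝ] EuclideanSpace ℝ (Fin n))
    (κg κH σ : ℝ)
    (hg : ‖gradient f x - g‖ ≤ κg * ‖s‖ ^ 2)
    (hb : ‖(H x - b) s‖ ≤ κH * ‖s‖ ^ 2) :
    f (x + s) - (f x + ⟪s, g⟫ + 1 / 2 * ⟪s, b s⟫ + σ / 3 * ‖s‖ ^ 3) ≤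
      (κg + LH / 2 + κH / 2 - σ / 3) * ‖s‖ ^ 3 := by
  have htaylor := taylor_remainder_le_of_lipschitz_hessian (x := x) (s := s) hdiff hH hLH.le
    (fun y => hHLip y x)
  have hgrad := inner_le_of_norm_le_mul_sq hg
  have hhess := inner_le_of_norm_le_mul_sq hb
  rw [inner_sub_left] at hgrad
  rw [sub_apply, inner_sub_left] at hhess
  rw [real_inner_comm g, real_inner_comm (b s)]
  have hthird : LH / 3 * ‖s‖ ^ 3 ≤ LH / 2 * ‖s‖ ^ 3 := by gcongr; norm_num
  linarith

/-- Key estimate in the proof of Lemma 4.2: bound on `f(x+s) - m(x+s)` for the cubic model. -/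
theorem stmt_14
    {n : ℕ} (f : EuclideanSpace ℝ (Fin n) → ℝ)
    (hdiff : Differentiable ℝ f)
    (H : EuclideanSpace ℝ (Fin n) → EuclideanSpace ℝ (Fin n) →L[ℝ] EuclideanSpace ℝ (Fin n))
    (hH : ∀ x, HasFDerivAt (gradient f) (H x) x)
    (LH : ℝ) (hLH : 0 < LH)
    (hHLip : ∀ x y, ‖H x - H y‖ ≤ LH * ‖x - y‖)
    (x s g : EuclideanSpace ℝ (Fin n))
    (b : EuclideanSpace ℝ (Fin n) →L[ℝ] EuclideanSpace ℝ (Fin n))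
    (κg κH σ : ℝ) (hκg : 0 < κg) (hκH : 0 < κH) (hσ : 0 < σ)
    (hg : ‖gradient f x - g‖ ≤ κg * ‖s‖ ^ 2)
    (hb : ‖(H x - b) s‖ ≤ κH * ‖s‖ ^ 2) :
    f (x + s) - (f x + ⟪s, g⟫ + 1 / 2 * ⟪s, b s⟫ + σ / 3 * ‖s‖ ^ 3) ≤
      (κg + LH / 2 + κH / 2 - σ / 3) * ‖s‖ ^ 3 :=
  stmt_14_general f hdiff H hH LH hLH hHLip x s g b κg κH σ hg hb
end

section
/- Under the hypotheses: $f \in C^2$ with $L$-Lipschitz gradient and $L_H$-Lipschitz Hessian, $\|\nabla f(x) - g\| \leq \kappa_g\|s\|^2$, $\|(H(x) - b)s\| \leq \kappa_H\|s\|^2$, and the termination condition $\|\nabla m(x+s)\| \leq \kappa_\theta \min\{1, \|s\|\}\|g\|$ with $\kappa_\theta \in (0,1)$, where $\nabla m(x+s) = g + bs + \sigma\|s\| s$, it holds that $(1 - \kappa_\theta)\|\nabla f(x+s)\| \leq (2\kappa_g + \kappa_H + L + L_H + \sigma)\|s\|^2$, and hence $\|s\| \geq \sqrt{\frac{(1-\kappa_\theta)\|\nabla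 f(x+s)\|}{\sigma + \kappa_s}}$ with $\kappa_s = 2\kappa_g + \kappa_H + L + L_H$. -/
/-!
Expanding `∇f(x+s)` around `x` writes it as the model gradient `g + b s + σ‖s‖ s` plus three
error terms (gradient error `κg‖s‖²`, Hessian error `κH‖s‖²`, Taylor remainder `LH‖s‖²`) minus
the cubic term `σ‖s‖²`. The termination rule bounds the model gradient by `κθ min(1,‖s‖) ‖g‖`,
and `‖g‖ ≤ κg‖s‖² + L‖s‖ + ‖∇f(x+s)‖`; the factor `min(1,‖s‖)` turns the right side into
`O(‖s‖²) + ‖∇f(x+s)‖`, and the `κθ ‖∇f(x+s)‖` is absorbed into the left side.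
-/

open Metric in
theorem norm_image_add_sub_sub_fderiv_le {E F : Type*} [NormedAddCommGroup E] [NormedSpace ℝ E]
    [NormedAddCommGroup F] [NormedSpace ℝ F] {G : E → F} {G' : E → E →L[ℝ] F} {M : ℝ}
    (hM : 0 ≤ M) (hG : ∀ y, HasFDerivAt G (G' y) y) (hG' : ∀ y z, ‖G' y - G' z‖ ≤ M * ‖y - z‖)
    (x s : E) : ‖G (x + s) - G x - G' x s‖ ≤ M * ‖s‖ ^ 2 := by
  have hderiv : ∀ y ∈ closedBall x ‖s‖,
      HasFDerivWithinAt (fun y ↦ G y - G' x y) (G' y - G' x) (closedBall x ‖s‖) y :=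
    fun y _ ↦ ((hG y).sub (G' x).hasFDerivAt).hasFDerivWithinAt
  have hbound : ∀ y ∈ closedBall x ‖s‖, ‖G' y - G' x‖ ≤ M * ‖s‖ := fun y hy ↦
    (hG' y x).trans (mul_le_mul_of_nonneg_left (mem_closedBall_iff_norm.mp hy) hM)
  have hxs : x + s ∈ closedBall x ‖s‖ := by simp
  have := (convex_closedBall x ‖s‖).norm_image_sub_le_of_norm_hasFDerivWithin_le hderiv hbound
    (mem_closedBall_self (norm_nonneg s)) hxs
  calc ‖G (x + s) - G x - G' x s‖ = ‖(G (x + s) - G' x (x + s)) - (G x - G' x x)‖ := by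
        rw [map_add]; congr 1; abel
    _ ≤ M * ‖s‖ * ‖x + s - x‖ := this
    _ = M * ‖s‖ ^ 2 := by rw [add_sub_cancel_left]; ring

theorem norm_le_model_grad_add_errors {E : Type*} [NormedAddCommGroup E] [NormedSpace ℝ E]
    (v w g s : E) (A B : E →L[ℝ] E) {σ : ℝ} (hσ : 0 ≤ σ) :
    ‖v‖ ≤ ‖g + B s + (σ * ‖s‖) • s‖ + ‖w - g‖ + ‖(A - B) s‖ + ‖v - w - A s‖ + σ * ‖s‖ ^ 2 := by
  have hdecomp : v = (g + B s + (σ * ‖s‖) • s) + (w - g) + (A - B) s + (v - w - A s)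
      - (σ * ‖s‖) • s := by
    simp only [sub_apply]; abel
  have hcubic : ‖(σ * ‖s‖) • s‖ = σ * ‖s‖ ^ 2 := by
    rw [norm_smul, Real.norm_of_nonneg (by positivity)]; ring
  calc ‖v‖ = ‖(g + B s + (σ * ‖s‖) • s) + (w - g) + (A - B) s + (v - w - A s)
        - (σ * ‖s‖) • s‖ := congrArg norm hdecomp
    _ ≤ ‖(g + B s + (σ * ‖s‖) • s) + (w - g) + (A - B) s + (v - w - A s)‖
        + ‖(σ * ‖s‖) • s‖ := norm_sub_le _ _
    _ ≤ _ := by rw [hcubic]; gcongr; exact norm_add₄_le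

theorem one_sub_mul_le_of_min_mul_le {κθ κg L c r G P : ℝ} (hκθ0 : 0 ≤ κθ) (hκθ1 : κθ ≤ 1)
    (hκg : 0 ≤ κg) (hL : 0 ≤ L) (hr : 0 ≤ r) (hP0 : 0 ≤ P)
    (hP : P ≤ κθ * min 1 r * G + (κg + c) * r ^ 2) (hG : G ≤ κg * r ^ 2 + L * r + P) :
    (1 - κθ) * P ≤ (2 * κg + L + c) * r ^ 2 := by
  have hmin0 : 0 ≤ min 1 r := le_min zero_le_one hr
  have hminG : min 1 r * G ≤ κg * r ^ 2 + L * r ^ 2 + P := by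
    calc min 1 r * G ≤ min 1 r * (κg * r ^ 2) + min 1 r * (L * r) + min 1 r * P := by
          rw [← mul_add, ← mul_add]; exact mul_le_mul_of_nonneg_left hG hmin0
      _ ≤ 1 * (κg * r ^ 2) + r * (L * r) + 1 * P := by
          gcongr <;> first | exact min_le_left _ _ | exact min_le_right _ _
      _ = _ := by ring
  have hθ : κθ * (min 1 r * G) ≤ κθ * (κg * r ^ 2 + L * r ^ 2 + P) := by gcongr
  nlinarith [mul_nonneg (sub_nonneg.mpr hκθ1) (mul_nonneg (add_nonneg hκg hL) (sq_nonneg r))]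

theorem stmt_15_general
    {n : ℕ} (f : EuclideanSpace ℝ (Fin n) → ℝ)
    (L : ℝ) (hL : 0 < L)
    (hgLip : ∀ x y, ‖gradient f x - gradient f y‖ ≤ L * ‖x - y‖)
    (H : EuclideanSpace ℝ (Fin n) → EuclideanSpace ℝ (Fin n) →L[ℝ] EuclideanSpace ℝ (Fin n))
    (hH : ∀ x, HasFDerivAt (gradient f) (H x) x)
    (LH : ℝ) (hLH : 0 < LH)
    (hHLip : ∀ x y, ‖H x - H y‖ ≤ LH * ‖x - y‖)
    (x s g : EuclideanSpace ℝ (Fin n))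
    (b : EuclideanSpace ℝ (Fin n) →L[ℝ] EuclideanSpace ℝ (Fin n))
    (κg κH σ κθ : ℝ) (hκg : 0 < κg) (hκH : 0 < κH) (hσ : 0 < σ)
    (hκθ0 : 0 < κθ) (hκθ1 : κθ < 1)
    (hg : ‖gradient f x - g‖ ≤ κg * ‖s‖ ^ 2)
    (hb : ‖(H x - b) s‖ ≤ κH * ‖s‖ ^ 2)
    (hterm : ‖g + b s + (σ * ‖s‖) • s‖ ≤ κθ * min 1 ‖s‖ * ‖g‖) :
    (1 - κθ) * ‖gradient f (x + s)‖ ≤ (2 * κg + κH + L + LH + σ) * ‖s‖ ^ 2 ∧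
      Real.sqrt ((1 - κθ) * ‖gradient f (x + s)‖ / (σ + (2 * κg + κH + L + LH))) ≤ ‖s‖ := by
  have hrem := norm_image_add_sub_sub_fderiv_le hLH.le hH hHLip x s
  have hgrad : ‖gradient f (x + s)‖ ≤ κθ * min 1 ‖s‖ * ‖g‖ + (κg + (κH + LH + σ)) * ‖s‖ ^ 2 := by
    have := norm_le_model_grad_add_errors (gradient f (x + s)) (gradient f x) g s (H x) b hσ.le
    linarith
  have hg_norm : ‖g‖ ≤ κg * ‖s‖ ^ 2 + L * ‖s‖ + ‖gradient f (x + s)‖ := by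
    have hstep : ‖gradient f x - gradient f (x + s)‖ ≤ L * ‖s‖ := by
      simpa using hgLip x (x + s)
    calc ‖g‖ ≤ ‖g - gradient f (x + s)‖ + ‖gradient f (x + s)‖ := norm_le_norm_sub_add _ _
      _ ≤ ‖g - gradient f x‖ + ‖gradient f x - gradient f (x + s)‖ + ‖gradient f (x + s)‖ := by
          gcongr; exact norm_sub_le_norm_sub_add_norm_sub _ _ _
      _ ≤ _ := by rw [norm_sub_rev]; linarith
  have hmain := one_sub_mul_le_of_min_mul_le hκθ0.le hκθ1.le hκg.le hL.le (norm_nonneg s)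
    (norm_nonneg _) hgrad hg_norm
  refine ⟨by linarith, ?_⟩
  rw [Real.sqrt_le_left (norm_nonneg s)]
  exact div_le_of_le_mul₀ (by positivity) (by positivity) (by linarith)

/-- Lemma 4.3: lower bound on the ARC step length. -/
theorem stmt_15
    {n : ℕ} (f : EuclideanSpace ℝ (Fin n) → ℝ)
    (hdiff : Differentiable ℝ f)
    (L : ℝ) (hL : 0 < L)
    (hgLip : ∀ x y, ‖gradient f x - gradient f y‖ ≤ L * ‖x - y‖)
    (H : EuclideanSpace ℝ (Fin n) → EuclideanSpace ℝ (Fin n) →L[ℝ] EuclideanSpace ℝ (Fin n))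
    (hH : ∀ x, HasFDerivAt (gradient f) (H x) x)
    (LH : ℝ) (hLH : 0 < LH)
    (hHLip : ∀ x y, ‖H x - H y‖ ≤ LH * ‖x - y‖)
    (x s g : EuclideanSpace ℝ (Fin n))
    (b : EuclideanSpace ℝ (Fin n) →L[ℝ] EuclideanSpace ℝ (Fin n))
    (κg κH σ κθ : ℝ) (hκg : 0 < κg) (hκH : 0 < κH) (hσ : 0 < σ)
    (hκθ0 : 0 < κθ) (hκθ1 : κθ < 1)
    (hg : ‖gradient f x - g‖ ≤ κg * ‖s‖ ^ 2)
    (hb : ‖(H x - b) s‖ ≤ κH * ‖s‖ ^ 2)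
    (hterm : ‖g + b s + (σ * ‖s‖) • s‖ ≤ κθ * min 1 ‖s‖ * ‖g‖) :
    (1 - κθ) * ‖gradient f (x + s)‖ ≤ (2 * κg + κH + L + LH + σ) * ‖s‖ ^ 2 ∧
      Real.sqrt ((1 - κθ) * ‖gradient f (x + s)‖ / (σ + (2 * κg + κH + L + LH))) ≤ ‖s‖ :=
  stmt_15_general f L hL hgLip H hH LH hLH hHLip x s g b κg κH σ κθ hκg hκH hσ hκθ0 hκθ1 hg hb hterm
end

section
/- Combining: if $f(x^k) - f(x^{k+1}) \geq \frac{\theta}{6}\sigma_k \|s^k\|^3$ and $\|s^k\| \geq \sqrt{\frac{(1-\kappa_\theta)\|\nabla f(x^{k+1})\|}{\sigma_k + \kappa_s}}$ with $\sigma_k \geq \sigma_{\min} > 0$ and $\kappa_s \leq \sigma_c$, then $f(x^k) - f(x^{k+1}) \geq \frac{\theta (1-\kappa_\theta)^{3/2} \sigma_{\min}}{12\sqrt{2}\,(\max\{\sigma_k, \sigma_c\})^{3/2}}\, \|\nabla f(x^{k+1})\|^{3/2}$. -/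
/-! The accepted step satisfies `‖s‖³ ≥ ((1 - κθ) ‖∇f(x⁺)‖ / (σ + κs))^{3/2}`, so the decrease
`θ/6 · σ ‖s‖³` is at least `θ/6 · (1 - κθ)^{3/2} ‖∇f(x⁺)‖^{3/2} · σ / (σ + κs)^{3/2}`. Since
`σ + κs ≤ 2 max σ σc`, the last factor is at least `σmin / (2√2 (max σ σc)^{3/2})`. -/

open Real

lemma Real.rpow_three_halves_le_pow_three_of_sqrt_le {a s : ℝ} (ha : 0 ≤ a) (h : √a ≤ s) :
    a ^ ((3 : ℝ) / 2) ≤ s ^ 3 := by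
  rw [rpow_div_two_eq_sqrt _ ha, show (3 : ℝ) = ((3 : ℕ) : ℝ) by norm_num, rpow_natCast]
  exact pow_le_pow_left₀ (sqrt_nonneg a) h 3

lemma Real.two_rpow_three_halves : (2 : ℝ) ^ ((3 : ℝ) / 2) = 2 * √2 := by
  rw [show (3 : ℝ) / 2 = 1 + 1 / 2 by norm_num, rpow_add two_pos, rpow_one, ← sqrt_eq_rpow]

lemma Real.add_rpow_three_halves_le_max {a b c : ℝ} (ha : 0 ≤ a) (hb : 0 ≤ b) (hbc : b ≤ c) :
    (a + b) ^ ((3 : ℝ) / 2) ≤ 2 * √2 * max a c ^ ((3 : ℝ) / 2) := by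
  have hsum : a + b ≤ 2 * max a c := by
    linarith [le_max_left a c, hbc.trans (le_max_right a c)]
  calc (a + b) ^ ((3 : ℝ) / 2) ≤ (2 * max a c) ^ ((3 : ℝ) / 2) :=
        rpow_le_rpow (by positivity) hsum (by norm_num)
    _ = 2 * √2 * max a c ^ ((3 : ℝ) / 2) := by
        rw [mul_rpow zero_le_two (ha.trans (le_max_left a c)), two_rpow_three_halves]

lemma div_two_sqrt_two_mul_max_rpow_le {σmin σ κ σc : ℝ} (hσmin : 0 < σmin) (hσ : σmin ≤ σ)
    (hκ : 0 ≤ κ) (hκσc : κ ≤ σc) :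
    σmin / (2 * √2 * max σ σc ^ ((3 : ℝ) / 2)) ≤ σ / (σ + κ) ^ ((3 : ℝ) / 2) := by
  have hσ0 : 0 < σ := hσmin.trans_le hσ
  exact div_le_div₀ hσ0.le hσ (by positivity)
    (add_rpow_three_halves_le_max hσ0.le hκ hκσc)

theorem stmt_16_general
    (fk fk1 snorm gnorm σk σmin σc κs θ κθ : ℝ)
    (hθ0 : 0 < θ) (hκθ1 : κθ < 1)
    (hσmin : 0 < σmin) (hσk : σmin ≤ σk) (hκs : 0 < κs) (hκsσc : κs ≤ σc)
    (hgnorm : 0 ≤ gnorm)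
    (hdec : θ / 6 * σk * snorm ^ 3 ≤ fk - fk1)
    (hstep : Real.sqrt ((1 - κθ) * gnorm / (σk + κs)) ≤ snorm) :
    θ * (1 - κθ) ^ ((3 : ℝ) / 2) * σmin /
        (12 * Real.sqrt 2 * (max σk σc) ^ ((3 : ℝ) / 2)) * gnorm ^ ((3 : ℝ) / 2) ≤
      fk - fk1 := by
  have hσk0 : 0 < σk := hσmin.trans_le hσk
  have hκθ : 0 ≤ 1 - κθ := by linarith
  calc θ * (1 - κθ) ^ ((3 : ℝ) / 2) * σmin /
        (12 * √2 * (max σk σc) ^ ((3 : ℝ) / 2)) * gnorm ^ ((3 : ℝ) / 2)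
      = θ / 6 * (1 - κθ) ^ ((3 : ℝ) / 2) * gnorm ^ ((3 : ℝ) / 2) *
          (σmin / (2 * √2 * max σk σc ^ ((3 : ℝ) / 2))) := by ring
    _ ≤ θ / 6 * (1 - κθ) ^ ((3 : ℝ) / 2) * gnorm ^ ((3 : ℝ) / 2) *
          (σk / (σk + κs) ^ ((3 : ℝ) / 2)) :=
        mul_le_mul_of_nonneg_left (div_two_sqrt_two_mul_max_rpow_le hσmin hσk hκs.le hκsσc)
          (by positivity)
    _ = θ / 6 * σk * ((1 - κθ) * gnorm / (σk + κs)) ^ ((3 : ℝ) / 2) := by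
        rw [div_rpow (by positivity) (by positivity), mul_rpow hκθ hgnorm]
        ring
    _ ≤ θ / 6 * σk * snorm ^ 3 := by
        gcongr
        exact rpow_three_halves_le_pow_three_of_sqrt_le (by positivity) hstep
    _ ≤ fk - fk1 := hdec

/-- Lemma 4.4: per-iteration function decrease of ARC on true successful iterations. -/
theorem stmt_16
    (fk fk1 snorm gnorm σk σmin σc κs θ κθ : ℝ)
    (hθ0 : 0 < θ) (hθ1 : θ < 1) (hκθ0 : 0 < κθ) (hκθ1 : κθ < 1)
    (hσmin : 0 < σmin) (hσk : σmin ≤ σk) (hκs : 0 < κs) (hκsσc : κs ≤ σc)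
    (hsnorm : 0 ≤ snorm) (hgnorm : 0 ≤ gnorm)
    (hdec : θ / 6 * σk * snorm ^ 3 ≤ fk - fk1)
    (hstep : Real.sqrt ((1 - κθ) * gnorm / (σk + κs)) ≤ snorm) :
    θ * (1 - κθ) ^ ((3 : ℝ) / 2) * σmin /
        (12 * Real.sqrt 2 * (max σk σc) ^ ((3 : ℝ) / 2)) * gnorm ^ ((3 : ℝ) / 2) ≤
      fk - fk1 :=
  stmt_16_general fk fk1 snorm gnorm σk σmin σc κs θ κθ hθ0 hκθ1 hσmin hσk hκs hκsσc hgnorm hdec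
    hstep
end
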